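/- For every κ ∈ (4,8) and every integer N ≥ 1 there exists a finite constant C = C(N,κ) > 0 such that for all real x₁ < x₂ < ⋯ < x_{2N}, the iterated integral F(x) = ∫_{x₁}^{x₂} du₁ ∫_{x₃}^{x₄} du₂ ⋯ ∫_{x_{2N−1}}^{x_{2N}} du_N ∏_{1≤i<j≤2N}(x_j−x_i)^{2/κ} · ∏_{1≤r<s≤N}|u_s−u_r|^{8/κ} · ∏_{t=1}^{N}∏_{j=1}^{2N}|u_t−x_j|^{−4/κ} (where u_r is integrated over the interval (x_{2r−1}, x_{2r})) is finite and satisfies 0 < F(x) ≤ C · ∏_{1≤i<j≤2N} |x_j−x_i|^{μ_{ij}}, where μ_{ij} = 10/κ if |x_j−x_i| ≥ 1 and μ_{ij} = −6/κ if |x_j−x_i| < 1. -/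

import Mathlib

/-!
On the box, `|u_s - u_r|` is at most the distance between the outer endpoints of the intervals
of `u_r` and `u_s`, and for `x_j` not an endpoint of the interval of `u_t`, `|u_t - x_j|` is at
least the distance from `x_j` to that interval. The two remaining singular factors
`(u_t - x_{2t-1})^(-4/κ) (x_{2t} - u_t)^(-4/κ)` are majorised by
`((x_{2t} - x_{2t-1})/2)^(-4/κ) ((u_t - x_{2t-1})^(-4/κ) + (x_{2t} - u_t)^(-4/κ))`, whose integral
is a constant times `(x_{2t} - x_{2t-1})^(1 - 8/κ)`, finite as `4/κ < 1`. The integral is thus at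
most `C ∏ (x_j - x_i)^(e_ij)`, and collecting exponents gives `-6/κ ≤ e_ij ≤ 10/κ`, so each factor
is at most `|x_j - x_i|^(μ_ij)`. Positivity: the integrand is positive on a box of positive volume.
-/

open MeasureTheory

/-- The Coulomb gas integrand for the fully unnested link pattern:
`∏_{i<j}(x_j−x_i)^{2/κ} · ∏_{r<s}|u_s−u_r|^{8/κ} · ∏_{t,j}|u_t−x_j|^{−4/κ}`. -/
noncomputable def cgIntegrand (κ : ℝ) (N : ℕ) (x : Fin (2*N) → ℝ) (u : Fin N → ℝ) : ℝ :=
  (∏ i : Fin (2*N), ∏ j ∈ Finset.Ioi i, (x j - x i) ^ (2/κ)) *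
  (∏ r : Fin N, ∏ s ∈ Finset.Ioi r, |u s - u r| ^ (8/κ)) *
  (∏ t : Fin N, ∏ j : Fin (2*N), |u t - x j| ^ (-(4/κ)))

/-- The integration region: `u_r ∈ (x_{2r−1}, x_{2r})` (1-based), i.e.
`u r ∈ (x (2r), x (2r+1))` in 0-based indexing. -/
def cgBox (N : ℕ) (x : Fin (2*N) → ℝ) : Set (Fin N → ℝ) :=
  {u | ∀ r : Fin N,
    u r ∈ Set.Ioo (x ⟨2*r.1, by have := r.isLt; omega⟩)
                  (x ⟨2*r.1 + 1, by have := r.isLt; omega⟩)}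

open Set

theorem Finset.prod_prod_Ioi_ite_eq_prod {ι α M : Type*} [LinearOrder ι] [Fintype ι]
    [LocallyFiniteOrderTop ι] [CommMonoid M] (s : Finset α) (f g : α → ι)
    (P : ι → ι → Prop) [DecidableRel P] (hinj : Set.InjOn (fun a => (f a, g a)) s)
    (hlt : ∀ a ∈ s, f a < g a) (hP : ∀ i j, i < j → (P i j ↔ ∃ a ∈ s, f a = i ∧ g a = j))
    (F : ι → ι → M) :
    ∏ i, ∏ j ∈ Finset.Ioi i, (if P i j then F i j else 1) = ∏ a ∈ s, F (f a) (g a) := by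
  have himage : (Finset.univ.filter fun p : ι × ι => p.1 < p.2 ∧ P p.1 p.2)
      = s.image fun a => (f a, g a) := by
    ext ⟨i, j⟩
    simp only [Finset.mem_filter, Finset.mem_univ, true_and, Finset.mem_image, Prod.mk.injEq]
    exact ⟨fun ⟨hij, hPij⟩ => (hP i j hij).1 hPij,
      fun ⟨a, ha, hi, hj⟩ => hi ▸ hj ▸ ⟨hlt a ha, (hP _ _ (hlt a ha)).2 ⟨a, ha, rfl, rfl⟩⟩⟩
  rw [← Finset.prod_image (f := fun p => F p.1 p.2) hinj, ← himage, Finset.prod_filter,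
    ← Finset.univ_product_univ, Finset.prod_product]
  refine Finset.prod_congr rfl fun i _ => ?_
  rw [← Finset.filter_lt_eq_Ioi, Finset.prod_filter]
  exact Finset.prod_congr rfl fun j _ => by simp only [ite_and]

theorem Real.rpow_le_rpow_ite_one_le {d e lo hi : ℝ} (hd : 0 < d) (hlo : lo ≤ e) (hhi : e ≤ hi) :
    d ^ e ≤ d ^ (if 1 ≤ d then hi else lo) := by
  split_ifs with h
  · exact Real.rpow_le_rpow_of_exponent_le h hhi
  · exact Real.rpow_le_rpow_of_exponent_ge hd (not_le.1 h).le hlo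

theorem Real.rpow_ite_zero (d e : ℝ) (P : Prop) [Decidable P] :
    d ^ (if P then e else 0) = if P then d ^ e else 1 := by
  split_ifs <;> simp

theorem prod_prod_Ioi_sub_rpow_nonneg {n : ℕ} {x : Fin n → ℝ} (hx : Monotone x) (p : ℝ) :
    0 ≤ ∏ i, ∏ j ∈ Finset.Ioi i, (x j - x i) ^ p :=
  Finset.prod_nonneg fun _ _ => Finset.prod_nonneg fun _ hj =>
    Real.rpow_nonneg (sub_nonneg.2 (hx (Finset.mem_Ioi.1 hj).le)) _

section OneDimensional

variable {a b r : ℝ}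

theorem intervalIntegrable_sub_rpow (hr : -1 < r) :
    IntervalIntegrable (fun v => (v - a) ^ r) volume a b := by
  simpa using
    (intervalIntegral.intervalIntegrable_rpow' (a := a - a) (b := b - a) hr).comp_sub_right a

theorem intervalIntegrable_rsub_rpow (hr : -1 < r) :
    IntervalIntegrable (fun v => (b - v) ^ r) volume a b := by
  simpa using
    ((intervalIntegral.intervalIntegrable_rpow' (a := b - b) (b := b - a) hr).comp_sub_left b).symm

theorem integral_sub_rpow (hr : -1 < r) :
    ∫ v in a..b, (v - a) ^ r = (b - a) ^ (r + 1) / (r + 1) := by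
  rw [intervalIntegral.integral_comp_sub_right (fun v => v ^ r), integral_rpow (.inl hr),
    sub_self, Real.zero_rpow (by linarith), sub_zero]

theorem integral_rsub_rpow (hr : -1 < r) :
    ∫ v in a..b, (b - v) ^ r = (b - a) ^ (r + 1) / (r + 1) := by
  rw [intervalIntegral.integral_comp_sub_left (fun v => v ^ r), integral_rpow (.inl hr),
    sub_self, Real.zero_rpow (by linarith), sub_zero]

end OneDimensional

/-- An elementary majorant of `(v - a)^(-c) (b - v)^(-c)` on `(a, b)`, integrated without the
Beta function. -/
noncomputable def endpointKernel (a b c : ℝ) (v : ℝ) : ℝ :=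
  ((b - a) / 2) ^ (-c) * ((v - a) ^ (-c) + (b - v) ^ (-c))

section EndpointKernel

variable {a b c v : ℝ}

theorem endpointKernel_nonneg (hv : v ∈ Icc a b) : 0 ≤ endpointKernel a b c v := by
  have := Real.rpow_nonneg (sub_nonneg.2 hv.1) (-c)
  have := Real.rpow_nonneg (sub_nonneg.2 hv.2) (-c)
  have := Real.rpow_nonneg (by linarith [hv.1, hv.2] : 0 ≤ (b - a) / 2) (-c)
  unfold endpointKernel
  positivity

theorem rpow_neg_mul_rpow_neg_le_endpointKernel (hc : 0 ≤ c) (hv : v ∈ Ioo a b) :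
    (v - a) ^ (-c) * (b - v) ^ (-c) ≤ endpointKernel a b c v := by
  obtain ⟨hav, hvb⟩ := hv
  have hX := Real.rpow_nonneg (sub_nonneg.2 hav.le) (-c)
  have hY := Real.rpow_nonneg (sub_nonneg.2 hvb.le) (-c)
  have hhalf : 0 < (b - a) / 2 := by linarith
  -- the farther endpoint is at distance at least `(b - a) / 2`
  rcases le_total (v - a) (b - v) with h | h
  · have : (b - v) ^ (-c) ≤ ((b - a) / 2) ^ (-c) :=
      Real.rpow_le_rpow_of_nonpos hhalf (by linarith) (neg_nonpos.2 hc)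
    unfold endpointKernel
    nlinarith
  · have : (v - a) ^ (-c) ≤ ((b - a) / 2) ^ (-c) :=
      Real.rpow_le_rpow_of_nonpos hhalf (by linarith) (neg_nonpos.2 hc)
    unfold endpointKernel
    nlinarith

theorem intervalIntegrable_endpointKernel (hc : c < 1) :
    IntervalIntegrable (endpointKernel a b c) volume a b :=
  ((intervalIntegrable_sub_rpow (by linarith)).add
    (intervalIntegrable_rsub_rpow (by linarith))).const_mul _

theorem integral_endpointKernel (hab : a < b) (hc : c < 1) :
    ∫ v in a..b, endpointKernel a b c v = 2 ^ c * 2 / (1 - c) * (b - a) ^ (1 - 2 * c) := by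
  have hba : 0 < b - a := by linarith
  have hsplit : (b - a) ^ (1 - 2 * c) = (b - a) ^ (-c) * (b - a) ^ (-c + 1) := by
    rw [← Real.rpow_add hba]; ring_nf
  simp only [endpointKernel]
  rw [intervalIntegral.integral_const_mul, intervalIntegral.integral_add
    (intervalIntegrable_sub_rpow (by linarith)) (intervalIntegrable_rsub_rpow (by linarith)),
    integral_sub_rpow (by linarith), integral_rsub_rpow (by linarith),
    Real.div_rpow hba.le zero_le_two, Real.rpow_neg zero_le_two, hsplit]
  field_simp
  ring

theorem integrable_indicator_endpointKernel (hab : a < b) (hc : c < 1) :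
    Integrable ((Ioo a b).indicator (endpointKernel a b c)) :=
  (integrable_indicator_iff measurableSet_Ioo).2 <|
    (intervalIntegrable_iff_integrableOn_Ioo_of_le hab.le).1 (intervalIntegrable_endpointKernel hc)

theorem integral_indicator_endpointKernel (hab : a < b) (hc : c < 1) :
    ∫ v, (Ioo a b).indicator (endpointKernel a b c) v
      = 2 ^ c * 2 / (1 - c) * (b - a) ^ (1 - 2 * c) := by
  rw [integral_indicator measurableSet_Ioo, ← integral_Ioc_eq_integral_Ioo,
    ← intervalIntegral.integral_of_le hab.le, integral_endpointKernel hab hc]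

end EndpointKernel

theorem abs_sub_rpow_neg_le_ite {n : ℕ} {x : Fin n → ℝ} (hx : StrictMono x) {i k : Fin n}
    (hik : k.1 = i.1 + 1) {c w : ℝ} (hc : 0 ≤ c) (hw : w ∈ Ioo (x i) (x k)) (j : Fin n) :
    |w - x j| ^ (-c) ≤
      ((if j = i then (w - x i) ^ (-c) else 1) * (if j = k then (x k - w) ^ (-c) else 1)) *
      ((if j < i then (x i - x j) ^ (-c) else 1) * (if k < j then (x j - x k) ^ (-c) else 1)) := by
  obtain ⟨hiw, hwk⟩ := hw
  have hik' : i < k := Fin.lt_def.2 (by omega)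
  have hcases : j < i ∨ j = i ∨ j = k ∨ k < j := by
    rcases lt_trichotomy j i with h | h | h
    · exact .inl h
    · exact .inr (.inl h)
    · exact .inr (.inr ((show k ≤ j from Fin.le_def.2 (by omega)).eq_or_lt.imp Eq.symm id))
  rcases hcases with hji | rfl | rfl | hkj
  · have hjk := hji.trans hik'
    have := hx hji
    simp only [hji, hji.ne, hjk.ne, hjk.not_gt, if_true, if_false, one_mul, mul_one]
    exact Real.rpow_le_rpow_of_nonpos (by linarith)
      (by rw [abs_of_pos (by linarith)]; linarith) (neg_nonpos.2 hc)
  · simp only [hik'.ne, hik'.not_gt, lt_irrefl, if_true, if_false, mul_one]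
    rw [abs_of_pos (by linarith)]
  · simp only [hik'.ne', hik'.not_gt, lt_irrefl, if_true, if_false, one_mul, mul_one]
    rw [abs_sub_comm, abs_of_pos (by linarith)]
  · have hij := hik'.trans hkj
    have := hx hkj
    simp only [hkj, hij.ne', hkj.ne', hij.not_gt, if_true, if_false, one_mul, mul_one]
    exact Real.rpow_le_rpow_of_nonpos (by linarith)
      (by rw [abs_sub_comm, abs_of_pos (by linarith)]; linarith) (neg_nonpos.2 hc)

/-- The two factors at the ends of the interval of `w` go into the endpoint kernel; the others
only grow when `w` is moved to the end of its interval nearer to `x j`. -/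
theorem prod_abs_sub_rpow_neg_le {n : ℕ} {x : Fin n → ℝ} (hx : StrictMono x) {i k : Fin n}
    (hik : k.1 = i.1 + 1) {c w : ℝ} (hc : 0 ≤ c) (hw : w ∈ Ioo (x i) (x k)) :
    ∏ j, |w - x j| ^ (-c) ≤ endpointKernel (x i) (x k) c w *
      ((∏ j ∈ Finset.Iio i, (x i - x j) ^ (-c)) * ∏ j ∈ Finset.Ioi k, (x j - x k) ^ (-c)) := by
  calc ∏ j, |w - x j| ^ (-c)
      ≤ ∏ j, ((if j = i then (w - x i) ^ (-c) else 1) * (if j = k then (x k - w) ^ (-c) else 1)) *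
          ((if j < i then (x i - x j) ^ (-c) else 1) *
            (if k < j then (x j - x k) ^ (-c) else 1)) :=
        Finset.prod_le_prod (fun j _ => Real.rpow_nonneg (abs_nonneg _) _) fun j _ =>
          abs_sub_rpow_neg_le_ite hx hik hc hw j
    _ = (w - x i) ^ (-c) * (x k - w) ^ (-c) *
          ((∏ j ∈ Finset.Iio i, (x i - x j) ^ (-c)) * ∏ j ∈ Finset.Ioi k, (x j - x k) ^ (-c)) := by
        simp only [Finset.prod_mul_distrib, Finset.prod_ite_eq', Finset.mem_univ, if_true,
          ← Finset.prod_filter, Finset.filter_gt_eq_Iio, Finset.filter_lt_eq_Ioi]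
    _ ≤ _ := by
        refine mul_le_mul_of_nonneg_right
          (rpow_neg_mul_rpow_neg_le_endpointKernel hc hw) (mul_nonneg ?_ ?_) <;>
        refine Finset.prod_nonneg fun j hj => Real.rpow_nonneg (sub_nonneg.2 (hx.monotone ?_)) _
        · exact (Finset.mem_Iio.1 hj).le
        · exact (Finset.mem_Ioi.1 hj).le

def leftIdx (N : ℕ) (t : Fin N) : Fin (2 * N) := ⟨2 * t.1, by omega⟩

def rightIdx (N : ℕ) (t : Fin N) : Fin (2 * N) := ⟨2 * t.1 + 1, by omega⟩

theorem leftIdx_lt_rightIdx {N : ℕ} {r s : Fin N} (h : r ≤ s) : leftIdx N r < rightIdx N s :=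
  Fin.lt_def.2 (by simp only [leftIdx, rightIdx]; omega)

theorem rightIdx_lt_leftIdx {N : ℕ} {r s : Fin N} (h : r < s) : rightIdx N r < leftIdx N s :=
  Fin.lt_def.2 (by simp only [leftIdx, rightIdx]; omega)

theorem cgBox_eq_pi (N : ℕ) (x : Fin (2 * N) → ℝ) :
    cgBox N x = univ.pi fun t => Ioo (x (leftIdx N t)) (x (rightIdx N t)) := by
  ext u
  simp [cgBox, leftIdx, rightIdx]

section CoulombGasBox

variable {N : ℕ} {x : Fin (2 * N) → ℝ} {u : Fin N → ℝ}

theorem mem_cgBox : u ∈ cgBox N x ↔ ∀ t, u t ∈ Ioo (x (leftIdx N t)) (x (rightIdx N t)) :=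
  Iff.rfl

theorem lt_of_mem_cgBox (hx : StrictMono x) (hu : u ∈ cgBox N x) {r s : Fin N} (h : r < s) :
    u r < u s :=
  (mem_cgBox.1 hu r).2.trans ((hx (rightIdx_lt_leftIdx h)).trans (mem_cgBox.1 hu s).1)

theorem ne_of_mem_cgBox (hx : StrictMono x) (hu : u ∈ cgBox N x) (t : Fin N) (j : Fin (2 * N)) :
    u t ≠ x j := by
  rcases le_or_gt j.1 (2 * t.1) with h | h
  · exact ((hx.monotone (Fin.le_def.2 h : j ≤ leftIdx N t)).trans_lt (mem_cgBox.1 hu t).1).ne'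
  · exact ((mem_cgBox.1 hu t).2.trans_le (hx.monotone (Fin.le_def.2 h : rightIdx N t ≤ j))).ne

theorem cgIntegrand_pos {κ : ℝ} (hx : StrictMono x) (hu : u ∈ cgBox N x) :
    0 < cgIntegrand κ N x u := by
  unfold cgIntegrand
  refine mul_pos (mul_pos ?_ ?_) ?_ <;>
    refine Finset.prod_pos fun i _ => Finset.prod_pos fun j hj => Real.rpow_pos_of_pos ?_ _
  · exact sub_pos.2 (hx (Finset.mem_Ioi.1 hj))
  · exact abs_pos.2 (sub_ne_zero.2 (lt_of_mem_cgBox hx hu (Finset.mem_Ioi.1 hj)).ne')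
  · exact abs_pos.2 (sub_ne_zero.2 (ne_of_mem_cgBox hx hu i j))

theorem cgIntegrand_nonneg {κ : ℝ} (hx : StrictMono x) (u : Fin N → ℝ) :
    0 ≤ cgIntegrand κ N x u := by
  unfold cgIntegrand
  refine mul_nonneg (mul_nonneg ?_ ?_) ?_ <;>
    refine Finset.prod_nonneg fun i _ => Finset.prod_nonneg fun j hj => Real.rpow_nonneg ?_ _
  · exact sub_nonneg.2 (hx (Finset.mem_Ioi.1 hj)).le
  all_goals exact abs_nonneg _

theorem prod_abs_sub_rpow_le_of_mem_cgBox {p : ℝ} (hp : 0 ≤ p) (hx : StrictMono x)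
    (hu : u ∈ cgBox N x) :
    ∏ r, ∏ s ∈ Finset.Ioi r, |u s - u r| ^ p
      ≤ ∏ r, ∏ s ∈ Finset.Ioi r, (x (rightIdx N s) - x (leftIdx N r)) ^ p := by
  refine Finset.prod_le_prod (fun r _ => Finset.prod_nonneg fun s _ =>
    Real.rpow_nonneg (abs_nonneg _) _) fun r _ => Finset.prod_le_prod
    (fun s _ => Real.rpow_nonneg (abs_nonneg _) _) fun s hs => ?_
  have hrs := lt_of_mem_cgBox hx hu (Finset.mem_Ioi.1 hs)
  refine Real.rpow_le_rpow (abs_nonneg _) ?_ hp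
  rw [abs_of_pos (sub_pos.2 hrs)]
  linarith [(mem_cgBox.1 hu r).1, (mem_cgBox.1 hu s).2]

end CoulombGasBox

/-- What remains of the integrand when `|u s - u r|` is replaced by its supremum over the box and
`|u t - x j|`, for `x j` not an endpoint of the interval of `u t`, by its infimum; the factors
`|u t - x j|^(-4/κ)` at the two endpoints are left out. -/
noncomputable def cgFrozenWeight (κ : ℝ) (N : ℕ) (x : Fin (2 * N) → ℝ) : ℝ :=
  (∏ i : Fin (2 * N), ∏ j ∈ Finset.Ioi i, (x j - x i) ^ (2 / κ)) *
  (∏ r : Fin N, ∏ s ∈ Finset.Ioi r, (x (rightIdx N s) - x (leftIdx N r)) ^ (8 / κ)) *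
  ∏ t : Fin N, ((∏ j ∈ Finset.Iio (leftIdx N t), (x (leftIdx N t) - x j) ^ (-(4 / κ))) *
    ∏ j ∈ Finset.Ioi (rightIdx N t), (x j - x (rightIdx N t)) ^ (-(4 / κ)))

theorem prod_prod_Ioi_cross_rpow_nonneg {N : ℕ} {x : Fin (2 * N) → ℝ} (hx : StrictMono x)
    (p : ℝ) : 0 ≤ ∏ r, ∏ s ∈ Finset.Ioi r, (x (rightIdx N s) - x (leftIdx N r)) ^ p :=
  Finset.prod_nonneg fun _ _ => Finset.prod_nonneg fun _ hs =>
    Real.rpow_nonneg (sub_nonneg.2 (hx (leftIdx_lt_rightIdx (Finset.mem_Ioi.1 hs).le)).le) _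

theorem cgFrozenWeight_nonneg (κ : ℝ) {N : ℕ} {x : Fin (2 * N) → ℝ} (hx : StrictMono x) :
    0 ≤ cgFrozenWeight κ N x := by
  unfold cgFrozenWeight
  refine mul_nonneg (mul_nonneg (prod_prod_Ioi_sub_rpow_nonneg hx.monotone _)
    (prod_prod_Ioi_cross_rpow_nonneg hx _)) (Finset.prod_nonneg fun t _ => mul_nonneg ?_ ?_) <;>
    refine Finset.prod_nonneg fun i hi => ?_
  · exact Real.rpow_nonneg (sub_nonneg.2 (hx (Finset.mem_Iio.1 hi)).le) _
  · exact Real.rpow_nonneg (sub_nonneg.2 (hx (Finset.mem_Ioi.1 hi)).le) _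

theorem cgIntegrand_le {κ : ℝ} (hκ : 0 ≤ κ) {N : ℕ} {x : Fin (2 * N) → ℝ} (hx : StrictMono x)
    {u : Fin N → ℝ} (hu : u ∈ cgBox N x) :
    cgIntegrand κ N x u ≤ cgFrozenWeight κ N x *
      ∏ t, endpointKernel (x (leftIdx N t)) (x (rightIdx N t)) (4 / κ) (u t) := by
  have hsites : ∏ t, ∏ j, |u t - x j| ^ (-(4 / κ)) ≤
      ∏ t, endpointKernel (x (leftIdx N t)) (x (rightIdx N t)) (4 / κ) (u t) *
        ((∏ j ∈ Finset.Iio (leftIdx N t), (x (leftIdx N t) - x j) ^ (-(4 / κ))) *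
          ∏ j ∈ Finset.Ioi (rightIdx N t), (x j - x (rightIdx N t)) ^ (-(4 / κ))) :=
    Finset.prod_le_prod (fun t _ => Finset.prod_nonneg fun j _ => Real.rpow_nonneg (abs_nonneg _) _)
      fun t _ => prod_abs_sub_rpow_neg_le hx (by simp [leftIdx, rightIdx]) (by positivity)
        (mem_cgBox.1 hu t)
  calc cgIntegrand κ N x u
      ≤ (∏ i : Fin (2 * N), ∏ j ∈ Finset.Ioi i, (x j - x i) ^ (2 / κ)) *
        (∏ r : Fin N, ∏ s ∈ Finset.Ioi r, (x (rightIdx N s) - x (leftIdx N r)) ^ (8 / κ)) *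
        ∏ t, endpointKernel (x (leftIdx N t)) (x (rightIdx N t)) (4 / κ) (u t) *
          ((∏ j ∈ Finset.Iio (leftIdx N t), (x (leftIdx N t) - x j) ^ (-(4 / κ))) *
            ∏ j ∈ Finset.Ioi (rightIdx N t), (x j - x (rightIdx N t)) ^ (-(4 / κ))) := by
        unfold cgIntegrand
        gcongr ?_ * ?_ * ?_
        · exact mul_nonneg (prod_prod_Ioi_sub_rpow_nonneg hx.monotone _)
            (prod_prod_Ioi_cross_rpow_nonneg hx _)
        · exact prod_prod_Ioi_sub_rpow_nonneg hx.monotone _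
        · exact prod_abs_sub_rpow_le_of_mem_cgBox (by positivity) hx hu
    _ = _ := by
        rw [Finset.prod_mul_distrib, cgFrozenWeight]
        ring

/-- The exponent of `x j - x i` (`i < j`, `0`-based) in the final bound: `2/κ` from the
integrand, `8/κ` if `x i, x j` are the outer endpoints of the intervals of `u r`, `u s` with
`r < s`, `-4/κ` for each endpoint at which a `u` was frozen, and `1 - 8/κ` from integrating the
endpoint kernel if `(x i, x j)` is the interval of some `u t`. -/
noncomputable def pairExponent (κ : ℝ) (i j : ℕ) : ℝ :=
  2 / κ + (if i % 2 = 0 ∧ j % 2 = 1 ∧ i + 1 < j then 8 / κ else 0)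
    + (if j % 2 = 0 then -(4 / κ) else 0) + (if i % 2 = 1 then -(4 / κ) else 0)
    + (if i % 2 = 0 ∧ j = i + 1 then 1 - 2 * (4 / κ) else 0)

theorem pairExponent_mem_Icc {κ : ℝ} (hκ : 0 < κ) (hκ16 : κ ≤ 16) {i j : ℕ} (hij : i < j) :
    pairExponent κ i j ∈ Icc (-(6 / κ)) (10 / κ) := by
  have h1 : 1 ≤ 16 / κ := (one_le_div hκ).2 hκ16
  unfold pairExponent
  simp only [div_eq_mul_inv] at h1 ⊢
  have : 0 < κ⁻¹ := inv_pos.2 hκ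
  constructor <;> split_ifs <;> first | omega | linarith

theorem prod_rpow_pairExponent_le {κ : ℝ} (hκ : 0 < κ) (hκ16 : κ ≤ 16) {N : ℕ}
    {x : Fin (2 * N) → ℝ} (hx : StrictMono x) :
    ∏ i : Fin (2 * N), ∏ j ∈ Finset.Ioi i, (x j - x i) ^ pairExponent κ i j
      ≤ ∏ i : Fin (2 * N), ∏ j ∈ Finset.Ioi i,
          |x j - x i| ^ (if 1 ≤ |x j - x i| then 10 / κ else -(6 / κ)) := by
  refine Finset.prod_le_prod (fun i _ => Finset.prod_nonneg fun j hj => Real.rpow_nonneg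
    (sub_nonneg.2 (hx (Finset.mem_Ioi.1 hj)).le) _) fun i _ => Finset.prod_le_prod
    (fun j hj => Real.rpow_nonneg (sub_nonneg.2 (hx (Finset.mem_Ioi.1 hj)).le) _) fun j hj => ?_
  have hij := Finset.mem_Ioi.1 hj
  obtain ⟨hlo, hhi⟩ := pairExponent_mem_Icc hκ hκ16 (Fin.lt_def.1 hij)
  rw [abs_of_pos (sub_pos.2 (hx hij))]
  exact Real.rpow_le_rpow_ite_one_le (sub_pos.2 (hx hij)) hlo hhi

section PairReindexing

variable {M : Type*} [CommMonoid M] {N : ℕ} (F : Fin (2 * N) → Fin (2 * N) → M)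

theorem prod_prod_Ioi_ite_eq_prod_cross :
    ∏ i : Fin (2 * N), ∏ j ∈ Finset.Ioi i,
      (if i.1 % 2 = 0 ∧ j.1 % 2 = 1 ∧ i.1 + 1 < j.1 then F i j else 1)
      = ∏ r : Fin N, ∏ s ∈ Finset.Ioi r, F (leftIdx N r) (rightIdx N s) := by
  rw [← Finset.prod_finset_product' (Finset.univ.filter fun q : Fin N × Fin N => q.1 < q.2)
    _ _ (by simp)]
  refine Finset.prod_prod_Ioi_ite_eq_prod _ (fun q : Fin N × Fin N => leftIdx N q.1)
    (fun q => rightIdx N q.2) _ ?_ (fun q hq => leftIdx_lt_rightIdx (Finset.mem_filter.1 hq).2.le)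
    (fun i j hij => ?_) F
  · intro q _ q' _ h
    simp only [Prod.mk.injEq, leftIdx, rightIdx, Fin.ext_iff] at h
    ext <;> omega
  · simp only [Finset.mem_filter, Finset.mem_univ, true_and, leftIdx, rightIdx, Fin.ext_iff,
      Prod.exists, Fin.lt_def] at hij ⊢
    constructor
    · rintro ⟨hi, hj, hij'⟩
      exact ⟨⟨i / 2, by omega⟩, ⟨j / 2, by omega⟩, by simp; omega, by simp; omega,
        by simp; omega⟩
    · rintro ⟨r, s, hrs, hi, hj⟩
      omega

theorem prod_prod_Ioi_ite_eq_prod_Iio_leftIdx :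
    ∏ i : Fin (2 * N), ∏ j ∈ Finset.Ioi i, (if j.1 % 2 = 0 then F i j else 1)
      = ∏ t : Fin N, ∏ j ∈ Finset.Iio (leftIdx N t), F j (leftIdx N t) := by
  rw [← Finset.prod_finset_product'
    (Finset.univ.filter fun q : Fin N × Fin (2 * N) => q.2 < leftIdx N q.1) _ _ (by simp)]
  refine Finset.prod_prod_Ioi_ite_eq_prod _ (fun q : Fin N × Fin (2 * N) => q.2)
    (fun q => leftIdx N q.1) _ ?_ (fun q hq => (Finset.mem_filter.1 hq).2) (fun i j hij => ?_) F
  · intro q _ q' _ h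
    simp only [Prod.mk.injEq, leftIdx, Fin.ext_iff] at h
    ext <;> omega
  · simp only [Finset.mem_filter, Finset.mem_univ, true_and, leftIdx, Fin.ext_iff,
      Prod.exists, Fin.lt_def] at hij ⊢
    constructor
    · intro hj
      exact ⟨⟨j / 2, by omega⟩, i, by simp; omega, rfl, by simp; omega⟩
    · rintro ⟨t, k, hkt, hk, hj⟩
      omega

theorem prod_prod_Ioi_ite_eq_prod_Ioi_rightIdx :
    ∏ i : Fin (2 * N), ∏ j ∈ Finset.Ioi i, (if i.1 % 2 = 1 then F i j else 1)
      = ∏ t : Fin N, ∏ j ∈ Finset.Ioi (rightIdx N t), F (rightIdx N t) j := by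
  rw [← Finset.prod_finset_product'
    (Finset.univ.filter fun q : Fin N × Fin (2 * N) => rightIdx N q.1 < q.2) _ _ (by simp)]
  refine Finset.prod_prod_Ioi_ite_eq_prod _ (fun q : Fin N × Fin (2 * N) => rightIdx N q.1)
    (fun q => q.2) _ ?_ (fun q hq => (Finset.mem_filter.1 hq).2) (fun i j hij => ?_) F
  · intro q _ q' _ h
    simp only [Prod.mk.injEq, rightIdx, Fin.ext_iff] at h
    ext <;> omega
  · simp only [Finset.mem_filter, Finset.mem_univ, true_and, rightIdx, Fin.ext_iff,
      Prod.exists, Fin.lt_def] at hij ⊢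
    constructor
    · intro hi
      exact ⟨⟨i / 2, by omega⟩, j, by simp; omega, by simp; omega, rfl⟩
    · rintro ⟨t, k, hkt, hi, hk⟩
      omega

theorem prod_prod_Ioi_ite_eq_prod_adjacent :
    ∏ i : Fin (2 * N), ∏ j ∈ Finset.Ioi i, (if i.1 % 2 = 0 ∧ j.1 = i.1 + 1 then F i j else 1)
      = ∏ t : Fin N, F (leftIdx N t) (rightIdx N t) := by
  refine Finset.prod_prod_Ioi_ite_eq_prod _ (leftIdx N) (rightIdx N) _ ?_
    (fun t _ => leftIdx_lt_rightIdx le_rfl) (fun i j hij => ?_) F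
  · intro t _ t' _ h
    simp only [Prod.mk.injEq, leftIdx, Fin.ext_iff] at h
    ext; omega
  · simp only [Finset.mem_univ, true_and, leftIdx, rightIdx, Fin.ext_iff]
    constructor
    · rintro ⟨hi, hj⟩
      exact ⟨⟨i / 2, by omega⟩, by simp; omega, by simp; omega⟩
    · rintro ⟨t, hi, hj⟩
      omega

end PairReindexing

theorem cgFrozenWeight_mul_prod_eq (κ : ℝ) {N : ℕ} {x : Fin (2 * N) → ℝ} (hx : StrictMono x) :
    cgFrozenWeight κ N x * ∏ t, (x (rightIdx N t) - x (leftIdx N t)) ^ (1 - 2 * (4 / κ))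
      = ∏ i : Fin (2 * N), ∏ j ∈ Finset.Ioi i, (x j - x i) ^ pairExponent κ i j := by
  have hsplit : ∀ i : Fin (2 * N), ∀ j ∈ Finset.Ioi i, (x j - x i) ^ pairExponent κ i j =
      (x j - x i) ^ (2 / κ) *
      (if i.1 % 2 = 0 ∧ j.1 % 2 = 1 ∧ i.1 + 1 < j.1 then (x j - x i) ^ (8 / κ) else 1) *
      (if j.1 % 2 = 0 then (x j - x i) ^ (-(4 / κ)) else 1) *
      (if i.1 % 2 = 1 then (x j - x i) ^ (-(4 / κ)) else 1) *
      (if i.1 % 2 = 0 ∧ j.1 = i.1 + 1 then (x j - x i) ^ (1 - 2 * (4 / κ)) else 1) := by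
    intro i j hj
    have hd := sub_pos.2 (hx (Finset.mem_Ioi.1 hj))
    simp only [pairExponent, Real.rpow_add hd, Real.rpow_ite_zero]
  simp only [Finset.prod_congr rfl (hsplit _), Finset.prod_mul_distrib]
  rw [prod_prod_Ioi_ite_eq_prod_cross (fun i j => (x j - x i) ^ (8 / κ)),
    prod_prod_Ioi_ite_eq_prod_Iio_leftIdx (fun i j => (x j - x i) ^ (-(4 / κ))),
    prod_prod_Ioi_ite_eq_prod_Ioi_rightIdx (fun i j => (x j - x i) ^ (-(4 / κ))),
    prod_prod_Ioi_ite_eq_prod_adjacent (fun i j => (x j - x i) ^ (1 - 2 * (4 / κ))),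
    cgFrozenWeight, Finset.prod_mul_distrib]
  ring

theorem measurableSet_cgBox (N : ℕ) (x : Fin (2 * N) → ℝ) : MeasurableSet (cgBox N x) :=
  cgBox_eq_pi N x ▸ MeasurableSet.univ_pi fun _ => measurableSet_Ioo

theorem volume_cgBox_pos {N : ℕ} {x : Fin (2 * N) → ℝ} (hx : StrictMono x) :
    0 < volume (cgBox N x) := by
  rw [cgBox_eq_pi, volume_pi_pi]
  exact CanonicallyOrderedAdd.prod_pos.2 fun t _ => by
    simpa [Real.volume_Ioo] using hx (leftIdx_lt_rightIdx (le_refl t))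

theorem measurable_cgIntegrand (κ : ℝ) (N : ℕ) (x : Fin (2 * N) → ℝ) :
    Measurable (cgIntegrand κ N x) := by
  unfold cgIntegrand
  fun_prop

noncomputable def cgMajorant (κ : ℝ) (N : ℕ) (x : Fin (2 * N) → ℝ) : (Fin N → ℝ) → ℝ :=
  fun u => cgFrozenWeight κ N x * ∏ t, (Ioo (x (leftIdx N t)) (x (rightIdx N t))).indicator
    (endpointKernel (x (leftIdx N t)) (x (rightIdx N t)) (4 / κ)) (u t)

section Integral

variable {κ : ℝ} {N : ℕ} {x : Fin (2 * N) → ℝ}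

theorem indicator_cgIntegrand_le_cgMajorant (hκ : 0 ≤ κ) (hx : StrictMono x) (u : Fin N → ℝ) :
    (cgBox N x).indicator (cgIntegrand κ N x) u ≤ cgMajorant κ N x u := by
  by_cases hu : u ∈ cgBox N x
  · simp only [indicator_of_mem hu, cgMajorant, indicator_of_mem (mem_cgBox.1 hu _)]
    exact cgIntegrand_le hκ hx hu
  · rw [indicator_of_notMem hu]
    exact mul_nonneg (cgFrozenWeight_nonneg κ hx) (Finset.prod_nonneg fun t _ =>
      indicator_nonneg (fun v hv => endpointKernel_nonneg (Ioo_subset_Icc_self hv)) _)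

theorem integrable_cgMajorant (hκ : 4 < κ) (hx : StrictMono x) :
    Integrable (cgMajorant κ N x) :=
  (Integrable.fintype_prod (f := fun t => (Ioo (x (leftIdx N t)) (x (rightIdx N t))).indicator
    (endpointKernel (x (leftIdx N t)) (x (rightIdx N t)) (4 / κ))) fun t =>
      integrable_indicator_endpointKernel (hx (leftIdx_lt_rightIdx le_rfl))
        ((div_lt_one (by linarith)).2 hκ)).const_mul _

theorem integral_cgMajorant (hκ : 4 < κ) (hx : StrictMono x) :
    ∫ u, cgMajorant κ N x u = (2 ^ (4 / κ) * 2 / (1 - 4 / κ)) ^ N *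
      ∏ i : Fin (2 * N), ∏ j ∈ Finset.Ioi i, (x j - x i) ^ pairExponent κ i j := by
  simp only [cgMajorant, integral_const_mul]
  rw [integral_fintype_prod_volume_eq_prod (f := fun t => (Ioo (x (leftIdx N t))
    (x (rightIdx N t))).indicator (endpointKernel (x (leftIdx N t)) (x (rightIdx N t)) (4 / κ)))]
  simp only [integral_indicator_endpointKernel (hx (leftIdx_lt_rightIdx le_rfl))
    ((div_lt_one (by linarith : (0 : ℝ) < κ)).2 hκ)]
  rw [Finset.prod_mul_distrib, Finset.prod_const, Finset.card_univ, Fintype.card_fin,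
    ← cgFrozenWeight_mul_prod_eq κ hx]
  ring

theorem integrableOn_cgIntegrand (hκ : 4 < κ) (hx : StrictMono x) :
    IntegrableOn (cgIntegrand κ N x) (cgBox N x) := by
  rw [← integrable_indicator_iff (measurableSet_cgBox N x)]
  refine (integrable_cgMajorant hκ hx).mono' ((measurable_cgIntegrand κ N x).indicator
    (measurableSet_cgBox N x)).aestronglyMeasurable (ae_of_all _ fun u => ?_)
  rw [Real.norm_eq_abs, abs_of_nonneg (indicator_nonneg (fun v _ => cgIntegrand_nonneg hx v) u)]
  exact indicator_cgIntegrand_le_cgMajorant (by linarith) hx u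

theorem setIntegral_cgIntegrand_pos (hκ : 4 < κ) (hx : StrictMono x) :
    0 < ∫ u in cgBox N x, cgIntegrand κ N x u := by
  rw [setIntegral_pos_iff_support_of_nonneg_ae (ae_of_all _ (cgIntegrand_nonneg hx))
    (integrableOn_cgIntegrand hκ hx)]
  exact (volume_cgBox_pos hx).trans_le
    (measure_mono fun u hu => ⟨(cgIntegrand_pos hx hu).ne', hu⟩)

theorem setIntegral_cgIntegrand_le (hκ : 4 < κ) (hx : StrictMono x) :
    ∫ u in cgBox N x, cgIntegrand κ N x u ≤ (2 ^ (4 / κ) * 2 / (1 - 4 / κ)) ^ N *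
      ∏ i : Fin (2 * N), ∏ j ∈ Finset.Ioi i, (x j - x i) ^ pairExponent κ i j := by
  rw [← integral_indicator (measurableSet_cgBox N x), ← integral_cgMajorant hκ hx]
  exact integral_mono ((integrableOn_cgIntegrand hκ hx).integrable_indicator
    (measurableSet_cgBox N x)) (integrable_cgMajorant hκ hx)
    (indicator_cgIntegrand_le_cgMajorant (by linarith) hx)

end Integral

theorem statement7_general (κ : ℝ) (hκ : κ ∈ Set.Ioo (4:ℝ) 8) (N : ℕ) :
    ∃ C : ℝ, 0 < C ∧ ∀ x : Fin (2*N) → ℝ, StrictMono x →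
      IntegrableOn (cgIntegrand κ N x) (cgBox N x) volume ∧
      0 < (∫ u in cgBox N x, cgIntegrand κ N x u) ∧
      (∫ u in cgBox N x, cgIntegrand κ N x u) ≤
        C * ∏ i : Fin (2*N), ∏ j ∈ Finset.Ioi i,
          |x j - x i| ^ (if 1 ≤ |x j - x i| then 10/κ else -(6/κ)) := by
  obtain ⟨hκ4, hκ8⟩ := hκ
  have hκ0 : 0 < κ := by linarith
  have hC : 0 < 2 ^ (4 / κ) * 2 / (1 - 4 / κ) :=
    div_pos (by positivity) (sub_pos.2 ((div_lt_one hκ0).2 hκ4))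
  refine ⟨_, pow_pos hC N, fun x hx => ⟨integrableOn_cgIntegrand hκ4 hx,
    setIntegral_cgIntegrand_pos hκ4 hx, ?_⟩⟩
  exact (setIntegral_cgIntegrand_le hκ4 hx).trans (mul_le_mul_of_nonneg_left
    (prod_rpow_pairExponent_le hκ0 (by linarith) hx) (pow_pos hC N).le)

/-- refined power-law bound for the Coulomb gas iterated integral:
for `κ ∈ (4,8)` and `N ≥ 1` there is a constant `C > 0` such that for all
`x₁ < ⋯ < x_{2N}` the integral is finite, strictly positive, and bounded by
`C·∏_{i<j}|x_j−x_i|^{μ_{ij}}` with `μ_{ij} = 10/κ` if `|x_j−x_i| ≥ 1` and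
`μ_{ij} = −6/κ` otherwise. -/
theorem statement7 (κ : ℝ) (hκ : κ ∈ Set.Ioo (4:ℝ) 8) (N : ℕ) (hN : 1 ≤ N) :
    ∃ C : ℝ, 0 < C ∧ ∀ x : Fin (2*N) → ℝ, StrictMono x →
      IntegrableOn (cgIntegrand κ N x) (cgBox N x) volume ∧
      0 < (∫ u in cgBox N x, cgIntegrand κ N x u) ∧
      (∫ u in cgBox N x, cgIntegrand κ N x u) ≤
        C * ∏ i : Fin (2*N), ∏ j ∈ Finset.Ioi i,
          |x j - x i| ^ (if 1 ≤ |x j - x i| then 10/κ else -(6/κ)) :=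
  statement7_general κ hκ N
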